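/- Every set P of n non-collinear points in the plane contains a point incident to at least √n of the lines determined by P. -/

import Mathlib

/-!
Dirac's argument. Let `L₀` be a line of `L(P)` with the largest number `m` of points of `P`,
and `Q ∈ P` a point off `L₀`. The lines joining `Q` to the `m` points of `L₀` are distinct, so
`m ≤ d(Q)`. The lines through `Q` cover the other `n - 1` points, at most `m - 1` on each, so
`n ≤ d(Q) (m - 1) + 1 ≤ d(Q) (d(Q) - 1) + 1 ≤ d(Q)²`.
-/

/-- A line in the plane: an affine subspace of ℝ² whose direction has dimension 1. -/
def IsLine (L : AffineSubspace ℝ (ℝ × ℝ)) : Prop :=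
  Module.finrank ℝ L.direction = 1

/-- The set of lines determined by `P`: lines passing through at least two points of `P`. -/
def detLines (P : Finset (ℝ × ℝ)) : Set (AffineSubspace ℝ (ℝ × ℝ)) :=
  {L | IsLine L ∧ 2 ≤ ((P : Set (ℝ × ℝ)) ∩ (L : Set (ℝ × ℝ))).ncard}

/-- `d(Q)`: the number of lines of `L(P)` incident to `Q`. -/
noncomputable def lineNum (P : Finset (ℝ × ℝ)) (Q : ℝ × ℝ) : ℕ :=
  {L ∈ detLines P | Q ∈ L}.ncard

/-- `l_r`: the number of `r`-rich lines, i.e. lines of `L(P)` passing through exactly `r`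
points of `P`. -/
noncomputable def richLines (P : Finset (ℝ × ℝ)) (r : ℕ) : ℕ :=
  {L ∈ detLines P | ((P : Set (ℝ × ℝ)) ∩ (L : Set (ℝ × ℝ))).ncard = r}.ncard

theorem Set.nontrivial_of_not_collinear {k V P : Type*} [DivisionRing k] [AddCommGroup V]
    [Module k V] [AddTorsor V P] {s : Set P} (h : ¬ Collinear k s) : s.Nontrivial := by
  by_contra hs
  rcases (Set.not_nontrivial_iff.1 hs).eq_empty_or_singleton with rfl | ⟨x, rfl⟩
  · exact h (collinear_empty k P)
  · exact h (collinear_singleton k x)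

theorem isLine_affineSpan_pair {a b : ℝ × ℝ} (h : a ≠ b) : IsLine line[ℝ, a, b] := by
  rw [IsLine, direction_affineSpan, vectorSpan_pair]
  exact finrank_span_singleton (vsub_ne_zero.2 h)

theorem IsLine.eq_affineSpan_pair {L : AffineSubspace ℝ (ℝ × ℝ)} (hL : IsLine L) {a b : ℝ × ℝ}
    (ha : a ∈ L) (hb : b ∈ L) (hab : a ≠ b) : L = line[ℝ, a, b] := by
  have hle : line[ℝ, a, b] ≤ L := affineSpan_pair_le_of_mem_of_mem ha hb
  refine (AffineSubspace.eq_of_direction_eq_of_nonempty_of_le ?_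
    ⟨a, left_mem_affineSpan_pair ℝ a b⟩ hle).symm
  refine Submodule.eq_of_le_of_finrank_eq (AffineSubspace.direction_le hle) ?_
  rw [hL, isLine_affineSpan_pair hab]

theorem IsLine.collinear_of_subset {L : AffineSubspace ℝ (ℝ × ℝ)} (hL : IsLine L)
    {s : Set (ℝ × ℝ)} (hs : s ⊆ L) : Collinear ℝ s := by
  rw [collinear_iff_rank_le_one]
  calc Module.rank ℝ (vectorSpan ℝ s)
      ≤ Module.rank ℝ L.direction :=
        Submodule.rank_mono ((vectorSpan_mono ℝ hs).trans_eq L.direction_eq_vectorSpan.symm)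
    _ = 1 := by rw [← Module.finrank_eq_rank, hL, Nat.cast_one]

section detLines

variable {P : Finset (ℝ × ℝ)}

theorem ncard_inter_eq_card_filter (P : Finset (ℝ × ℝ)) (L : AffineSubspace ℝ (ℝ × ℝ))
    [DecidablePred (· ∈ L)] :
    ((P : Set (ℝ × ℝ)) ∩ (L : Set (ℝ × ℝ))).ncard = (P.filter (· ∈ L)).card := by
  rw [← Set.ncard_coe_finset, Finset.coe_filter]
  rfl

theorem affineSpan_pair_mem_detLines {a b : ℝ × ℝ} (ha : a ∈ P) (hb : b ∈ P) (hab : a ≠ b) :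
    line[ℝ, a, b] ∈ detLines P :=
  ⟨isLine_affineSpan_pair hab, (Set.one_lt_ncard (P.finite_toSet.inter_of_left _)).2
    ⟨a, ⟨ha, left_mem_affineSpan_pair ℝ a b⟩, b, ⟨hb, right_mem_affineSpan_pair ℝ a b⟩, hab⟩⟩

theorem exists_pair_of_mem_detLines {L : AffineSubspace ℝ (ℝ × ℝ)} (hL : L ∈ detLines P) :
    ∃ a ∈ P, ∃ b ∈ P, a ≠ b ∧ a ∈ L ∧ b ∈ L := by
  obtain ⟨a, ha, b, hb, hab⟩ := (Set.one_lt_ncard (P.finite_toSet.inter_of_left _)).1 hL.2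
  exact ⟨a, ha.1, b, hb.1, hab, ha.2, hb.2⟩

theorem detLines_finite (P : Finset (ℝ × ℝ)) : (detLines P).Finite := by
  refine ((P ×ˢ P).finite_toSet.image fun p ↦ line[ℝ, p.1, p.2]).subset fun L hL ↦ ?_
  obtain ⟨a, ha, b, hb, hab, haL, hbL⟩ := exists_pair_of_mem_detLines hL
  exact ⟨(a, b), by simp [ha, hb], (hL.1.eq_affineSpan_pair haL hbL hab).symm⟩

theorem detLines_nonempty (hP : ¬ Collinear ℝ (P : Set (ℝ × ℝ))) : (detLines P).Nonempty := by
  obtain ⟨a, ha, b, hb, hab⟩ := Set.nontrivial_of_not_collinear hP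
  exact ⟨_, affineSpan_pair_mem_detLines ha hb hab⟩

theorem lineNum_eq_card_filter (P : Finset (ℝ × ℝ)) (Q : ℝ × ℝ)
    [DecidablePred fun L : AffineSubspace ℝ (ℝ × ℝ) ↦ Q ∈ L] :
    lineNum P Q = ((detLines_finite P).toFinset.filter (Q ∈ ·)).card := by
  rw [lineNum, ← Set.ncard_coe_finset, Finset.coe_filter]
  simp only [Set.Finite.mem_toFinset]

theorem ncard_inter_le_lineNum {L : AffineSubspace ℝ (ℝ × ℝ)} (hL : IsLine L) {Q : ℝ × ℝ}
    (hQ : Q ∈ P) (hQL : Q ∉ L) :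
    ((P : Set (ℝ × ℝ)) ∩ (L : Set (ℝ × ℝ))).ncard ≤ lineNum P Q := by
  have hne : ∀ p ∈ L, Q ≠ p := fun p hp h ↦ hQL (h ▸ hp)
  refine Set.ncard_le_ncard_of_injOn (fun p ↦ line[ℝ, Q, p])
    (fun p hp ↦ ⟨affineSpan_pair_mem_detLines hQ hp.1 (hne p hp.2),
      left_mem_affineSpan_pair ℝ Q p⟩)
    (fun p₁ hp₁ p₂ hp₂ heq ↦ ?_) ((detLines_finite P).subset fun _ h ↦ h.1)
  by_contra h₁₂
  have heq : line[ℝ, Q, p₁] = line[ℝ, Q, p₂] := heq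
  have hp₁Q : p₁ ∈ line[ℝ, Q, p₂] := heq ▸ right_mem_affineSpan_pair ℝ Q p₁
  have hQp₂ : line[ℝ, Q, p₂] = line[ℝ, p₁, p₂] :=
    (isLine_affineSpan_pair (hne p₂ hp₂.2)).eq_affineSpan_pair hp₁Q
      (right_mem_affineSpan_pair ℝ Q p₂) h₁₂
  apply hQL
  rw [hL.eq_affineSpan_pair hp₁.2 hp₂.2 h₁₂, ← hQp₂]
  exact left_mem_affineSpan_pair ℝ Q p₂

theorem card_le_lineNum_mul_add_one {a : ℝ × ℝ} (ha : a ∈ P) {m : ℕ}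
    (hm : ∀ L ∈ detLines P, ((P : Set (ℝ × ℝ)) ∩ (L : Set (ℝ × ℝ))).ncard ≤ m) :
    P.card ≤ lineNum P a * (m - 1) + 1 := by
  classical
  have hcover : (P.erase a).card ≤ (m - 1) * lineNum P a := by
    rw [lineNum_eq_card_filter]
    refine Finset.card_le_mul_card_image_of_maps_to (f := fun p ↦ line[ℝ, a, p]) ?_ _ ?_
    · intro p hp
      obtain ⟨hpa, hp⟩ := Finset.mem_erase.1 hp
      exact Finset.mem_filter.2 ⟨(detLines_finite P).mem_toFinset.2
        (affineSpan_pair_mem_detLines ha hp hpa.symm), left_mem_affineSpan_pair ℝ a p⟩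
    · intro L hL
      obtain ⟨hLP, haL⟩ := Finset.mem_filter.1 hL
      have hfiber : (P.erase a).filter (fun p ↦ line[ℝ, a, p] = L) ⊆
          (P.filter (· ∈ L)).erase a := fun p hp ↦ by
        obtain ⟨hp', rfl⟩ := Finset.mem_filter.1 hp
        obtain ⟨hpa, hp⟩ := Finset.mem_erase.1 hp'
        exact Finset.mem_erase.2 ⟨hpa, Finset.mem_filter.2 ⟨hp, right_mem_affineSpan_pair ℝ a p⟩⟩
      calc _ ≤ ((P.filter (· ∈ L)).erase a).card := Finset.card_le_card hfiber
        _ = ((P : Set (ℝ × ℝ)) ∩ (L : Set (ℝ × ℝ))).ncard - 1 := by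
          rw [Finset.card_erase_of_mem (Finset.mem_filter.2 ⟨ha, haL⟩),
            ncard_inter_eq_card_filter]
        _ ≤ m - 1 := Nat.sub_le_sub_right (hm L ((detLines_finite P).mem_toFinset.1 hLP)) 1
  rw [Finset.card_erase_of_mem ha, mul_comm] at hcover
  omega

end detLines

/-- Dirac's theorem: every set `P` of `n` non-collinear points in the plane contains a point
incident to at least `√n` lines of `L(P)`. -/
theorem exists_point_sqrt_lines (n : ℕ) (P : Finset (ℝ × ℝ))
    (hcard : P.card = n) (hnoncol : ¬ Collinear ℝ (P : Set (ℝ × ℝ))) :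
    ∃ Q ∈ P, Real.sqrt n ≤ lineNum P Q := by
  obtain ⟨L₀, hL₀, hmax⟩ := Set.exists_max_image (detLines P)
    (fun L ↦ ((P : Set (ℝ × ℝ)) ∩ (L : Set (ℝ × ℝ))).ncard) (detLines_finite P)
    (detLines_nonempty hnoncol)
  obtain ⟨Q, hQ, hQL₀⟩ : ∃ Q ∈ P, Q ∉ L₀ := by
    by_contra! h
    exact hnoncol (hL₀.1.collinear_of_subset h)
  refine ⟨Q, hQ, (Real.sqrt_le_left (Nat.cast_nonneg _)).2 ?_⟩
  set m := ((P : Set (ℝ × ℝ)) ∩ (L₀ : Set (ℝ × ℝ))).ncard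
  set d := lineNum P Q
  have hm : 2 ≤ m := hL₀.2
  have hmd : m ≤ d := ncard_inter_le_lineNum hL₀.1 hQ hQL₀
  have hnd : n ≤ d * (m - 1) + 1 := hcard ▸ card_le_lineNum_mul_add_one hQ hmax
  have hsq : d * (m - 1) + 1 ≤ d ^ 2 := by
    have hd : 1 ≤ d := by omega
    calc d * (m - 1) + 1 ≤ d * (d - 1) + 1 := by gcongr
      _ ≤ d ^ 2 := by zify [hd]; nlinarith
  exact_mod_cast hnd.trans hsq
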